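/- Let V : ℂ^{d_A} → ℂ^{M} be an isometry (V†V = 1_A), {|z⟩}_{z=1}^{M} an orthonormal basis of ℂ^{M}, and ρ_A a density matrix on ℂ^{d_A} with D(ρ_A, 1_A/d_A) ≤ δ where δ ≤ 1/(2 d_A). For each z with V†|z⟩ ≠ 0, define the unit vectors |ψ_z⟩ := √ρ_A V†|z⟩ / ‖√ρ_A V†|z⟩‖ and |φ_z⟩ := V†|z⟩ / ‖V†|z⟩‖, and set ψ_z := |ψ_z⟩⟨ψ_z|, φ_z := |φ_z⟩⟨φ_z|. Then D(ψ_z, φ_z) ≤ 2√(d_A δ). -/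

import Mathlib

/- Common definitions: trace norm, trace distance, Kronecker powers, outer products,
post-measurement ensembles, row ensembles of isometries, and Haar moment operators. -/

open scoped BigOperators ComplexConjugate ComplexOrder
open MeasureTheory Matrix

noncomputable section

instance {m n : Type*} : MeasurableSpace (Matrix m n ℂ) := borel _
instance {m n : Type*} : BorelSpace (Matrix m n ℂ) := ⟨rfl⟩

/-- The positive semidefinite square root of a positive semidefinite matrix (as defined in
the older Mathlib, where it was `Matrix.PosSemidef.sqrt`). -/
def Matrix.PosSemidef.sqrt {n 𝕜 : Type*} [Fintype n] [RCLike 𝕜] [DecidableEq n]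
    {A : Matrix n n 𝕜} (hA : A.PosSemidef) : Matrix n n 𝕜 :=
  hA.1.eigenvectorUnitary.1 * Matrix.diagonal ((↑) ∘ (√·) ∘ hA.1.eigenvalues) *
    (star hA.1.eigenvectorUnitary : Matrix n n 𝕜)

/-- The trace norm (Schatten 1-norm) `‖A‖₁ = Tr[√(AᴴA)]`. -/
def traceNorm {n : Type*} [Fintype n] [DecidableEq n] (A : Matrix n n ℂ) : ℝ :=
  ((Matrix.posSemidef_conjTranspose_mul_self A).sqrt.trace).re

/-- The trace distance `D(A,B) = ‖A - B‖₁ / 2`. -/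
def traceDist {n : Type*} [Fintype n] [DecidableEq n] (A B : Matrix n n ℂ) : ℝ :=
  traceNorm (A - B) / 2

/-- The Hilbert-Schmidt (Frobenius) norm `‖A‖₂ = √(Tr[AᴴA])`. -/
def hsNorm {m n : Type*} [Fintype m] [Fintype n] (A : Matrix m n ℂ) : ℝ :=
  Real.sqrt ((Aᴴ * A).trace).re

/-- The `k`-fold tensor (Kronecker) power of a matrix on `ℂ^d`,
as an operator on `(ℂ^d)^{⊗ k}`. -/
def tpow {d : ℕ} (ρ : Matrix (Fin d) (Fin d) ℂ) (k : ℕ) :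
    Matrix (Fin k → Fin d) (Fin k → Fin d) ℂ :=
  Matrix.of fun x y => ∏ i, ρ (x i) (y i)

/-- The tensor product `ρ^{⊗ l} ⊗ A ⊗ ρ^{⊗ (k - (l+1))}` on `(ℂ^d)^{⊗ k}`,
with `A` inserted at position `l`. -/
def tpowIns {d : ℕ} (ρ A : Matrix (Fin d) (Fin d) ℂ) (k l : ℕ) :
    Matrix (Fin k → Fin d) (Fin k → Fin d) ℂ :=
  Matrix.of fun x y => ∏ i : Fin k, if (i : ℕ) = l then A (x i) (y i) else ρ (x i) (y i)

/-- The outer product (rank-one projection for a unit vector) `|v⟩⟨v|`. -/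
def outer {d : ℕ} (v : Fin d → ℂ) : Matrix (Fin d) (Fin d) ℂ :=
  Matrix.of fun i j => v i * star (v j)

/-- Squared Euclidean norm of a vector in `ℂ^d`. -/
def nsq {d : ℕ} (v : Fin d → ℂ) : ℝ := ∑ i, Complex.normSq (v i)

/-- Euclidean norm of a vector in `ℂ^d`. -/
def l2norm {d : ℕ} (v : Fin d → ℂ) : ℝ := Real.sqrt (nsq v)

/-- The normalization `v / ‖v‖` of a vector. -/
def normalizeVec {d : ℕ} (v : Fin d → ℂ) : Fin d → ℂ :=
  fun i => v i / (Real.sqrt (nsq v) : ℂ)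

/-- For an unnormalized vector `v` with weight `p = ‖v‖²`, the contribution
`p (|v/‖v‖⟩⟨v/‖v‖|)^{⊗ k}` to a `k`-th moment operator (zero when `v = 0`,
i.e. the ensemble member occurs with probability zero). -/
def momentTerm {d : ℕ} (v : Fin d → ℂ) (k : ℕ) :
    Matrix (Fin k → Fin d) (Fin k → Fin d) ℂ :=
  if v = 0 then 0 else ((nsq v : ℝ) : ℂ) • tpow (outer (normalizeVec v)) k

/-- The `k`-th moment operator `∑_{z : v_z ≠ 0} p_z (|ψ_z⟩⟨ψ_z|)^{⊗ k}` of the row ensemble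
induced by `V : ℂ^{d_A} → ℂ^M` with respect to the orthonormal basis `e` of `ℂ^M`:
`⟨v_z| := ⟨z|V`, `|ψ_z⟩ := |v_z⟩/‖v_z‖`, `p_z := ‖v_z‖²/d_A`. -/
def rowMoment {dA M : ℕ} (V : Matrix (Fin M) (Fin dA) ℂ) (e : Fin M → Fin M → ℂ) (k : ℕ) :
    Matrix (Fin k → Fin dA) (Fin k → Fin dA) ℂ :=
  ((dA : ℂ))⁻¹ • ∑ z, momentTerm (fun j => star (Matrix.vecMul (star (e z)) V j)) k

/-- The `k`-th moment operator `∑_{z : p_z > 0} p_z (|ψ_z⟩⟨ψ_z|)^{⊗ k}` of the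
post-measurement ensemble of the pure state `Ψ ∈ ℂ^{d_A} ⊗ ℂ^M` measured on the second
factor in the orthonormal basis `b`: `p_z := ⟨Ψ|(1 ⊗ |b_z⟩⟨b_z|)|Ψ⟩` and
`|ψ_z⟩ := (1 ⊗ ⟨b_z|)|Ψ⟩ / √p_z`. -/
def postMoment {dA M : ℕ} (Ψ : Fin dA × Fin M → ℂ) (b : Fin M → (Fin M → ℂ)) (k : ℕ) :
    Matrix (Fin k → Fin dA) (Fin k → Fin dA) ℂ :=
  ∑ z, momentTerm (fun i => dotProduct (star (b z)) (fun w => Ψ (i, w))) k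

/-- The `k`-th Haar moment operator `∫ (U|e₁⟩⟨e₁|Uᴴ)^{⊗ k} dU` on `(ℂ^d)^{⊗ k}`,
where `ν` is the (normalized) Haar measure on the unitary group `U(d)`. -/
def haarMoment {d : ℕ} [NeZero d] (ν : Measure (Matrix.unitaryGroup (Fin d) ℂ)) (k : ℕ) :
    Matrix (Fin k → Fin d) (Fin k → Fin d) ℂ :=
  Matrix.of fun x y =>
    ∫ U, (∏ i, ((U : Matrix (Fin d) (Fin d) ℂ) (x i) 0 *
      star ((U : Matrix (Fin d) (Fin d) ℂ) (y i) 0))) ∂ν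


/-! ### Auxiliary lemmas -/

def outer2 {d : ℕ} (a b : Fin d → ℂ) : Matrix (Fin d) (Fin d) ℂ :=
  Matrix.of fun i j => a i * star (b j)

lemma outer2_mul {d : ℕ} (a b u w : Fin d → ℂ) :
    outer2 a b * outer2 u w = (dotProduct (star b) u) • outer2 a w := by
  ext i j
  simp [outer2, Matrix.mul_apply, dotProduct, Finset.sum_mul, Finset.mul_sum]
  congr 1; ext k; ring

lemma trace_outer2 {d : ℕ} (a b : Fin d → ℂ) :
    (outer2 a b).trace = dotProduct (star b) a := by
  simp [outer2, Matrix.trace, Matrix.diag, dotProduct, mul_comm]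

lemma conjTranspose_outer2 {d : ℕ} (a b : Fin d → ℂ) :
    (outer2 a b)ᴴ = outer2 b a := by
  ext i j; simp [outer2, Matrix.conjTranspose_apply, mul_comm]

lemma star_dot_comm {d : ℕ} (a b : Fin d → ℂ) :
    dotProduct (star a) b = starRingEnd ℂ (dotProduct (star b) a) := by
  simp [dotProduct, map_sum]
  congr 1; ext i; ring

lemma A2_eq {d : ℕ} (ψ φ : Fin d → ℂ) (hψ : dotProduct (star ψ) ψ = 1)
    (hφ : dotProduct (star φ) φ = 1) :
    (outer2 ψ ψ - outer2 φ φ) * (outer2 ψ ψ - outer2 φ φ) =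
      outer2 ψ ψ + outer2 φ φ - (dotProduct (star ψ) φ) • outer2 ψ φ
        - (starRingEnd ℂ (dotProduct (star ψ) φ)) • outer2 φ ψ := by
  rw [sub_mul, mul_sub, mul_sub, outer2_mul, outer2_mul, outer2_mul, outer2_mul, hψ, hφ,
    star_dot_comm φ ψ]
  module

lemma A4_eq {d : ℕ} (ψ φ : Fin d → ℂ) (hψ : dotProduct (star ψ) ψ = 1)
    (hφ : dotProduct (star φ) φ = 1) :
    ((outer2 ψ ψ - outer2 φ φ) * (outer2 ψ ψ - outer2 φ φ)) *
      ((outer2 ψ ψ - outer2 φ φ) * (outer2 ψ ψ - outer2 φ φ)) =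
      ((1 - Complex.normSq (dotProduct (star ψ) φ) : ℝ) : ℂ) •
        ((outer2 ψ ψ - outer2 φ φ) * (outer2 ψ ψ - outer2 φ φ)) := by
  rw [A2_eq ψ φ hψ hφ]
  set c := dotProduct (star ψ) φ with hc
  have hcc : starRingEnd ℂ c * c = (Complex.normSq c : ℂ) := by
    rw [mul_comm, Complex.mul_conj]
  have hcc' : c * starRingEnd ℂ c = (Complex.normSq c : ℂ) := Complex.mul_conj c
  have hc2 : dotProduct (star φ) ψ = starRingEnd ℂ c := star_dot_comm φ ψ
  simp only [sub_mul, mul_sub, add_mul, mul_add, smul_mul_assoc, mul_smul_comm,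
    outer2_mul, hψ, hφ, hc2, ← hc, smul_smul, one_smul, Complex.ofReal_sub,
    Complex.ofReal_one, sub_smul]
  simp only [hcc, hcc']
  module


lemma dot_self_eq_nsq {d : ℕ} (v : Fin d → ℂ) :
    dotProduct (star v) v = ((nsq v : ℝ) : ℂ) := by
  simp only [dotProduct, nsq, Pi.star_apply, Complex.ofReal_sum]
  congr 1; ext i
  rw [Complex.normSq_eq_conj_mul_self]
  rfl

lemma nsq_nonneg {d : ℕ} (v : Fin d → ℂ) : 0 ≤ nsq v :=
  Finset.sum_nonneg fun i _ => Complex.normSq_nonneg _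

lemma nsq_pos {d : ℕ} {v : Fin d → ℂ} (hv : v ≠ 0) : 0 < nsq v := by
  rcases (nsq_nonneg v).lt_or_eq with h | h
  · exact h
  · exfalso; apply hv; ext i
    have := Finset.sum_eq_zero_iff_of_nonneg
      (fun i (_ : i ∈ Finset.univ) => Complex.normSq_nonneg (v i)) |>.mp h.symm i (by simp)
    simpa [Complex.normSq_eq_zero] using this

lemma cauchy_schwarz_nsq {d : ℕ} (ψ φ : Fin d → ℂ) :
    Complex.normSq (dotProduct (star ψ) φ) ≤ nsq ψ * nsq φ := by
  let x : EuclideanSpace ℂ (Fin d) := (WithLp.equiv 2 _).symm ψ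
  let y : EuclideanSpace ℂ (Fin d) := (WithLp.equiv 2 _).symm φ
  have hinner : (inner ℂ x y : ℂ) = dotProduct (star ψ) φ :=
    by rw [EuclideanSpace.inner_eq_star_dotProduct, dotProduct_comm]; rfl
  have hx : ‖x‖ = Real.sqrt (nsq ψ) := by
    rw [EuclideanSpace.norm_eq]
    congr 1
    unfold nsq
    congr 1; ext i
    rw [show (x i : ℂ) = ψ i from rfl, Complex.sq_norm]
  have hy : ‖y‖ = Real.sqrt (nsq φ) := by
    rw [EuclideanSpace.norm_eq]
    congr 1
    unfold nsq
    congr 1; ext i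
    rw [show (y i : ℂ) = φ i from rfl, Complex.sq_norm]
  have h := norm_inner_le_norm (𝕜 := ℂ) x y
  rw [hinner, hx, hy] at h
  have h2 : ‖dotProduct (star ψ) φ‖ ^ 2 ≤
      (Real.sqrt (nsq ψ) * Real.sqrt (nsq φ)) ^ 2 :=
    pow_le_pow_left₀ (norm_nonneg _) h 2
  calc Complex.normSq (dotProduct (star ψ) φ)
      = ‖dotProduct (star ψ) φ‖ ^ 2 := by
        rw [Complex.sq_norm]
    _ ≤ (Real.sqrt (nsq ψ) * Real.sqrt (nsq φ)) ^ 2 := h2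
    _ = nsq ψ * nsq φ := by
        rw [mul_pow, Real.sq_sqrt (nsq_nonneg ψ), Real.sq_sqrt (nsq_nonneg φ)]

lemma psd_sqrt_eq_of_sq_eq {n : Type*} [Fintype n] [DecidableEq n] {S A : Matrix n n ℂ}
    (hA : A.PosSemidef) (hS : S.PosSemidef) (h : S ^ 2 = A) : hA.sqrt = S := by
  have h1 : hA.sqrt = cfc Real.sqrt A := by
    rw [hA.1.cfc_eq, IsHermitian.cfc, Unitary.conjStarAlgAut_apply]; rfl
  have hSa : IsSelfAdjoint S := hS.1
  rw [h1, ← h, ← cfc_pow_id (R := ℝ) S 2, ← cfc_comp Real.sqrt (fun x : ℝ => x ^ 2) S]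
  conv_rhs => rw [← cfc_id' ℝ S]
  apply cfc_congr
  intro x hx
  obtain ⟨i, rfl⟩ := hS.1.spectrum_real_eq_range_eigenvalues ▸ hx
  simp [Real.sqrt_sq (hS.eigenvalues_nonneg i)]

lemma traceNorm_eq_of {n : Type*} [Fintype n] [DecidableEq n] {S X : Matrix n n ℂ}
    (hS : S.PosSemidef) (h : S ^ 2 = Xᴴ * X) : traceNorm X = S.trace.re := by
  rw [traceNorm, psd_sqrt_eq_of_sq_eq _ hS h]

lemma traceNorm_zero {n : Type*} [Fintype n] [DecidableEq n] :
    traceNorm (0 : Matrix n n ℂ) = 0 := by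
  have : (0 : Matrix n n ℂ) ^ 2 = (0 : Matrix n n ℂ)ᴴ * 0 := by simp
  rw [traceNorm_eq_of Matrix.PosSemidef.zero this]
  simp

lemma posSemidef_outer2 {d : ℕ} (φ : Fin d → ℂ) : (outer2 φ φ).PosSemidef := by
  have : outer2 φ φ = (Matrix.of fun (_ : Fin 1) j => star (φ j))ᴴ *
      (Matrix.of fun (_ : Fin 1) j => star (φ j)) := by
    ext i j
    simp [outer2, Matrix.mul_apply, Matrix.conjTranspose_apply, mul_comm]
  rw [this]
  exact Matrix.posSemidef_conjTranspose_mul_self _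

lemma traceNorm_neg_outer {d : ℕ} (φ : Fin d → ℂ)
    (hφ : dotProduct (star φ) φ = 1) :
    traceNorm ((0 : Matrix (Fin d) (Fin d) ℂ) - outer2 φ φ) = 1 := by
  have h2 : (outer2 φ φ) ^ 2 = ((0 : Matrix (Fin d) (Fin d) ℂ) - outer2 φ φ)ᴴ *
      ((0 : Matrix (Fin d) (Fin d) ℂ) - outer2 φ φ) := by
    rw [zero_sub, Matrix.conjTranspose_neg, conjTranspose_outer2, neg_mul_neg, pow_two,
      outer2_mul, hφ, one_smul]
  rw [traceNorm_eq_of (posSemidef_outer2 φ) h2, trace_outer2, hφ]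
  simp

lemma rankone_traceNorm {d : ℕ} (ψ φ : Fin d → ℂ)
    (hψ : dotProduct (star ψ) ψ = 1) (hφ : dotProduct (star φ) φ = 1) :
    traceNorm (outer2 ψ ψ - outer2 φ φ) ≤
      2 * Real.sqrt (1 - Complex.normSq (dotProduct (star ψ) φ)) := by
  set c := dotProduct (star ψ) φ with hc
  set s := 1 - Complex.normSq c with hs
  have hs0 : 0 ≤ s := by
    have := cauchy_schwarz_nsq ψ φ
    have h1 : nsq ψ = 1 := by
      have := dot_self_eq_nsq ψ; rw [hψ] at this
      exact_mod_cast (Complex.ofReal_eq_one.mp this.symm)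
    have h2 : nsq φ = 1 := by
      have := dot_self_eq_nsq φ; rw [hφ] at this
      exact_mod_cast (Complex.ofReal_eq_one.mp this.symm)
    rw [h1, h2, mul_one] at this
    simpa [hs] using this
  set A := outer2 ψ ψ - outer2 φ φ with hA
  have hAH : Aᴴ = A := by
    simp [hA, Matrix.conjTranspose_sub, conjTranspose_outer2]
  have hA4 : (A * A) * (A * A) = ((s : ℝ) : ℂ) • (A * A) := A4_eq ψ φ hψ hφ
  have htr2 : (A * A).trace = ((2 * s : ℝ) : ℂ) := by
    rw [A2_eq ψ φ hψ hφ]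
    simp only [Matrix.trace_sub, Matrix.trace_add, Matrix.trace_smul, trace_outer2,
      hψ, hφ, star_dot_comm φ ψ, ← hc, smul_eq_mul]
    have e1 : c * (starRingEnd ℂ) c = ((Complex.normSq c : ℝ) : ℂ) := Complex.mul_conj c
    have e2 : (starRingEnd ℂ) c * c = ((Complex.normSq c : ℝ) : ℂ) := by
      rw [mul_comm]; exact Complex.mul_conj c
    rw [e1, e2]
    push_cast [hs]
    ring
  rcases hs0.lt_or_eq with hpos | hzero
  · -- s > 0
    have hr : Real.sqrt s > 0 := Real.sqrt_pos.mpr hpos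
    set T := (((Real.sqrt s)⁻¹ : ℝ) : ℂ) • (A * A) with hT
    have hTpsd : T.PosSemidef := by
      have key : T = ((((Real.sqrt ((Real.sqrt s)⁻¹) : ℝ) : ℂ) • A)ᴴ) *
          ((((Real.sqrt ((Real.sqrt s)⁻¹) : ℝ) : ℂ) • A)) := by
        rw [Matrix.conjTranspose_smul, hAH, Matrix.smul_mul, Matrix.mul_smul, smul_smul]
        rw [hT]
        congr 1
        rw [Complex.star_def, Complex.conj_ofReal, ← Complex.ofReal_mul,
          Real.mul_self_sqrt (inv_nonneg.mpr hr.le)]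
      rw [key]
      exact Matrix.posSemidef_conjTranspose_mul_self _
    have hT2 : T ^ 2 = Aᴴ * A := by
      rw [pow_two, hT, Matrix.smul_mul, Matrix.mul_smul, smul_smul, hA4, smul_smul, hAH]
      rw [← Complex.ofReal_mul, ← Complex.ofReal_mul]
      rw [show (Real.sqrt s)⁻¹ * (Real.sqrt s)⁻¹ * s = 1 by
        rw [← mul_inv, Real.mul_self_sqrt hpos.le]
        exact inv_mul_cancel₀ hpos.ne']
      rw [Complex.ofReal_one, one_smul]
    rw [traceNorm_eq_of hTpsd hT2, hT, Matrix.trace_smul, htr2, smul_eq_mul,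
      ← Complex.ofReal_mul, Complex.ofReal_re]
    rw [show (Real.sqrt s)⁻¹ * (2 * s) = 2 * (s / Real.sqrt s) by ring, Real.div_sqrt]
  · -- s = 0
    have h4 : (A * A) * (A * A) = 0 := by rw [hA4, ← hzero]; simp
    have hAA : (A * A)ᴴ = A * A := by rw [Matrix.conjTranspose_mul, hAH]
    have h2 : A * A = 0 := by
      have : (A * A)ᴴ * (A * A) = 0 := by rw [hAA, h4]
      exact Matrix.conjTranspose_mul_self_eq_zero.mp this
    have hA0 : A = 0 := by
      have : Aᴴ * A = 0 := by rw [hAH, h2]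
      exact Matrix.conjTranspose_mul_self_eq_zero.mp this
    rw [hA0, traceNorm_zero]
    positivity


section Sand

variable {n : Type*} [Fintype n] [DecidableEq n]

/-- Conjugation of a real diagonal by `U`. -/
def sand (U : Matrix n n ℂ) (g : n → ℝ) : Matrix n n ℂ :=
  U * Matrix.diagonal (fun i => (g i : ℂ)) * Uᴴ

variable {U : Matrix n n ℂ}

lemma sand_mul (hU1 : Uᴴ * U = 1) (g h : n → ℝ) :
    sand U g * sand U h = sand U (fun i => g i * h i) := by
  unfold sand
  rw [show U * Matrix.diagonal (fun i => (g i : ℂ)) * Uᴴ *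
      (U * Matrix.diagonal (fun i => (h i : ℂ)) * Uᴴ) =
      U * (Matrix.diagonal (fun i => (g i : ℂ)) * (Uᴴ * U) *
        Matrix.diagonal (fun i => (h i : ℂ))) * Uᴴ by
    simp only [Matrix.mul_assoc]]
  rw [hU1, Matrix.mul_one, Matrix.diagonal_mul_diagonal]
  push_cast
  rfl

lemma sand_herm (g : n → ℝ) : (sand U g)ᴴ = sand U g := by
  unfold sand
  rw [Matrix.conjTranspose_mul, Matrix.conjTranspose_mul, Matrix.diagonal_conjTranspose,
    Matrix.conjTranspose_conjTranspose, Matrix.mul_assoc]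
  congr 2
  ext i j
  simp [Matrix.diagonal, Complex.star_def, Complex.conj_ofReal]

lemma sand_psd (g : n → ℝ) (hg : ∀ i, 0 ≤ g i) : (sand U g).PosSemidef := by
  apply Matrix.PosSemidef.mul_mul_conjTranspose_same
  exact Matrix.posSemidef_diagonal_iff.mpr fun i => Complex.zero_le_real.mpr (hg i)

lemma sand_trace (hU1 : Uᴴ * U = 1) (g : n → ℝ) :
    (sand U g).trace = ((∑ i, g i : ℝ) : ℂ) := by
  unfold sand
  rw [Matrix.trace_mul_cycle, hU1, Matrix.one_mul, Matrix.trace_diagonal]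
  push_cast
  rfl

lemma sand_sub (g h : n → ℝ) : sand U g - sand U h = sand U (fun i => g i - h i) := by
  unfold sand
  rw [← Matrix.sub_mul, ← Matrix.mul_sub, Matrix.diagonal_sub]
  push_cast
  rfl

lemma sand_one (hU2 : U * Uᴴ = 1) : sand U (fun _ => 1) = 1 := by
  unfold sand
  simp [hU2]

lemma sand_quad (g : n → ℝ) (x : n → ℂ) :
    dotProduct (star x) ((sand U g).mulVec x) =
      ((∑ i, g i * Complex.normSq ((Uᴴ.mulVec x) i) : ℝ) : ℂ) := by
  have h1 : (sand U g).mulVec x =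
      U.mulVec ((Matrix.diagonal fun i => (g i : ℂ)).mulVec (Uᴴ.mulVec x)) := by
    simp [sand, Matrix.mulVec_mulVec, Matrix.mul_assoc]
  rw [h1, Matrix.dotProduct_mulVec (star x) U]
  rw [show Matrix.vecMul (star x) U = star (Uᴴ.mulVec x) by
    rw [Matrix.star_mulVec, Matrix.conjTranspose_conjTranspose]]
  simp only [dotProduct, Matrix.mulVec_diagonal, Pi.star_apply, Complex.ofReal_sum,
    Complex.ofReal_mul]
  congr 1; ext i
  rw [Complex.normSq_eq_conj_mul_self]
  rw [show star ((Uᴴ.mulVec x) i) = starRingEnd ℂ ((Uᴴ.mulVec x) i) from rfl]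
  ring

lemma sand_traceNorm (hU1 : Uᴴ * U = 1) (g : n → ℝ) :
    traceNorm (sand U g) = ∑ i, |g i| := by
  have habs : sand U (fun i => |g i|) ^ 2 = (sand U g)ᴴ * (sand U g) := by
    rw [sand_herm, pow_two, sand_mul hU1, sand_mul hU1,
      show (fun i : n => |g i| * |g i|) = fun i => g i * g i from
        funext fun i => abs_mul_abs_self _]
  rw [traceNorm_eq_of (sand_psd _ fun i => abs_nonneg _) habs, sand_trace hU1,
    Complex.ofReal_re]

end Sand


lemma outer_eq_outer2 {d : ℕ} (v : Fin d → ℂ) : outer v = outer2 v v := rfl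

lemma nsq_normalize {d : ℕ} {v : Fin d → ℂ} (hv : v ≠ 0) : nsq (normalizeVec v) = 1 := by
  have hN : 0 < nsq v := nsq_pos hv
  unfold nsq normalizeVec
  have : ∀ i, Complex.normSq (v i / ((Real.sqrt (nsq v) : ℝ) : ℂ)) =
      Complex.normSq (v i) / nsq v := by
    intro i
    rw [map_div₀, Complex.normSq_ofReal, Real.mul_self_sqrt hN.le]
  simp only [this, ← Finset.sum_div]
  exact div_self hN.ne'

lemma dot_normalize {d : ℕ} {v : Fin d → ℂ} (hv : v ≠ 0) :
    dotProduct (star (normalizeVec v)) (normalizeVec v) = 1 := by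
  rw [dot_self_eq_nsq, nsq_normalize hv, Complex.ofReal_one]

lemma normalizeVec_zero {d : ℕ} : normalizeVec (0 : Fin d → ℂ) = 0 := by
  ext i
  simp [normalizeVec]

lemma dot_normalize_pair {d : ℕ} (w v : Fin d → ℂ) :
    dotProduct (star (normalizeVec w)) (normalizeVec v) =
      dotProduct (star w) v /
        (((Real.sqrt (nsq w) : ℝ) : ℂ) * ((Real.sqrt (nsq v) : ℝ) : ℂ)) := by
  unfold normalizeVec
  simp only [dotProduct, Pi.star_apply, Finset.sum_div]
  congr 1; ext i
  rw [star_div₀, Complex.star_def, Complex.conj_ofReal]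
  ring


lemma scalar_main (a b N S1 S2 D d : ℝ) (ha : 0 ≤ a) (hb : 0 < b) (hN : 0 < N)
    (hS2 : 0 < S2) (h1 : Real.sqrt a * N ≤ S1) (h2 : S2 ≤ b * N)
    (hba : b - a ≤ 4 * D) (hdb : 1 ≤ d * b) (hD : 0 ≤ D) :
    1 - (S1 / (Real.sqrt S2 * Real.sqrt N)) ^ 2 ≤ 4 * (d * D) := by
  have hS1nn : 0 ≤ S1 := le_trans (mul_nonneg (Real.sqrt_nonneg _) hN.le) h1
  have hsq : (Real.sqrt S2 * Real.sqrt N) ^ 2 = S2 * N := by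
    rw [mul_pow, Real.sq_sqrt hS2.le, Real.sq_sqrt hN.le]
  have hS1sq : a * N ^ 2 ≤ S1 ^ 2 := by
    have h3 : Real.sqrt a * Real.sqrt a = a := Real.mul_self_sqrt ha
    nlinarith [mul_self_le_mul_self (mul_nonneg (Real.sqrt_nonneg a) hN.le) h1]
  have hfrac : a / b ≤ (S1 / (Real.sqrt S2 * Real.sqrt N)) ^ 2 := by
    rw [div_pow, hsq]
    have hd : 0 < S2 * N := mul_pos hS2 hN
    have hd2 : S2 * N ≤ b * N ^ 2 := by nlinarith
    calc a / b = (a * N ^ 2) / (b * N ^ 2) := by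
          rw [mul_div_mul_right _ _ (by positivity : (N : ℝ) ^ 2 ≠ 0)]
      _ ≤ S1 ^ 2 / (S2 * N) := div_le_div₀ (by positivity) hS1sq hd hd2
  have hab : 1 - a / b ≤ 4 * (d * D) := by
    have h4 : 1 - a / b = (b - a) / b := by field_simp
    rw [h4]
    have h5 : (b - a) / b ≤ (4 * D) / b := by gcongr
    have h6 : (4 * D) / b ≤ 4 * (d * D) := by
      rw [div_le_iff₀ hb]
      nlinarith
    linarith
  linarith

set_option maxHeartbeats 2000000

/-- closeness of the post-measurement states `ψ_z = √ρ_A V†|z⟩ / ‖·‖` and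
`φ_z = V†|z⟩ / ‖·‖` in trace distance when `D(ρ_A, 1/d_A) ≤ δ ≤ 1/(2 d_A)`. -/
theorem post_measurement_states_close {dA M : ℕ} [NeZero dA]
    (V : Matrix (Fin M) (Fin dA) ℂ) (hV : Vᴴ * V = 1)
    (e : Fin M → Fin M → ℂ)
    (he : ∀ z w, dotProduct (star (e z)) (e w) = if z = w then 1 else 0)
    (ρA : Matrix (Fin dA) (Fin dA) ℂ) (hρ : ρA.PosSemidef) (hρtr : ρA.trace = 1)
    (δ : ℝ) (hδ : traceDist ρA ((dA : ℂ)⁻¹ • 1) ≤ δ) (hδ' : δ ≤ 1 / (2 * dA)) :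
    ∀ z, Vᴴ.mulVec (e z) ≠ 0 →
      traceDist (outer (normalizeVec (hρ.sqrt.mulVec (Vᴴ.mulVec (e z)))))
          (outer (normalizeVec (Vᴴ.mulVec (e z))))
        ≤ 2 * Real.sqrt (dA * δ) := by
  intro z hz
  classical
  set v : Fin dA → ℂ := Vᴴ.mulVec (e z) with hv
  -- spectral data for ρA
  set W : Matrix (Fin dA) (Fin dA) ℂ := (hρ.1.eigenvectorUnitary : Matrix (Fin dA) (Fin dA) ℂ)
    with hWdef
  set lam : Fin dA → ℝ := hρ.1.eigenvalues with hlam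
  have hW1 : Wᴴ * W = 1 := by
    rw [← Matrix.star_eq_conjTranspose]
    exact (Unitary.mem_iff.mp hρ.1.eigenvectorUnitary.2).1
  have hW2 : W * Wᴴ = 1 := by
    rw [← Matrix.star_eq_conjTranspose]
    exact (Unitary.mem_iff.mp hρ.1.eigenvectorUnitary.2).2
  have hρeq : ρA = sand W lam := by
    conv_lhs => rw [hρ.1.spectral_theorem]
    rfl
  have hsqrt : hρ.sqrt = sand W (fun i => Real.sqrt (lam i)) := rfl
  have hdA : (0 : ℝ) < (dA : ℝ) := by
    exact_mod_cast Nat.pos_of_ne_zero (NeZero.ne dA)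
  set κ : ℝ := ((dA : ℝ))⁻¹ with hκ
  have hκpos : 0 < κ := inv_pos.mpr hdA
  -- identity matrix as a sandwich
  have hId : ((dA : ℂ)⁻¹ • 1 : Matrix (Fin dA) (Fin dA) ℂ) = sand W (fun _ => κ) := by
    unfold sand
    have hdiag : (Matrix.diagonal (fun _ : Fin dA => ((κ : ℝ) : ℂ)))
        = ((κ : ℝ) : ℂ) • (1 : Matrix (Fin dA) (Fin dA) ℂ) := by
      ext i j
      by_cases h : i = j <;> simp [Matrix.diagonal, Matrix.one_apply, h]
    rw [hdiag, Matrix.mul_smul, Matrix.mul_one, Matrix.smul_mul, hW2]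
    congr 1
    rw [hκ]
    push_cast
    rfl
  have hBeq : ρA - (dA : ℂ)⁻¹ • 1 = sand W (fun i => lam i - κ) := by
    rw [hρeq, hId, sand_sub]
  have htn : traceNorm (ρA - (dA : ℂ)⁻¹ • 1) = ∑ i, |lam i - κ| := by
    rw [hBeq, sand_traceNorm hW1]
  have htd : ∑ i, |lam i - κ| ≤ 2 * δ := by
    have h1 : traceDist ρA ((dA : ℂ)⁻¹ • 1) = traceNorm (ρA - (dA : ℂ)⁻¹ • 1) / 2 := rfl
    rw [h1, htn] at hδ
    linarith
  have hev : ∀ i, |lam i - κ| ≤ 2 * δ := fun i =>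
    le_trans (Finset.single_le_sum (f := fun i => |lam i - κ|)
      (fun j _ => abs_nonneg _) (Finset.mem_univ i)) htd
  have hδ0 : 0 ≤ δ := by
    have h0 : 0 ≤ ∑ i, |lam i - κ| := Finset.sum_nonneg fun i _ => abs_nonneg _
    linarith
  have hδκ : δ ≤ κ / 2 := by
    have : 1 / (2 * (dA : ℝ)) = κ / 2 := by
      rw [hκ]
      field_simp
    linarith [hδ'.trans_eq this]
  set α : ℝ := κ - 2 * δ with hα
  set β : ℝ := κ + 2 * δ with hβ
  have hα0 : 0 ≤ α := by rw [hα]; linarith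
  have hβpos : 0 < β := by rw [hβ]; linarith
  have hlo : ∀ i, α ≤ lam i := fun i => by
    have := abs_le.mp (hev i); rw [hα]; linarith [this.1]
  have hhi : ∀ i, lam i ≤ β := fun i => by
    have := abs_le.mp (hev i); rw [hβ]; linarith [this.2]
  -- the vector and its components
  set w : Fin dA → ℂ := hρ.sqrt.mulVec v with hw
  set nn : Fin dA → ℝ := fun i => Complex.normSq ((Wᴴ.mulVec v) i) with hnn
  have hnn0 : ∀ i, 0 ≤ nn i := fun i => Complex.normSq_nonneg _
  set N : ℝ := nsq v with hN
  have hNpos : 0 < N := nsq_pos hz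
  have hNsum : N = ∑ i, nn i := by
    have h1 := sand_quad (U := W) (fun _ => 1) v
    rw [sand_one hW2, Matrix.one_mulVec, dot_self_eq_nsq] at h1
    have := Complex.ofReal_inj.mp h1
    simpa using this
  have hS2sum : nsq w = ∑ i, lam i * nn i := by
    have h1 : dotProduct (star w) w =
        dotProduct (star v) ((hρ.sqrt * hρ.sqrt).mulVec v) := by
      simp only [hw, Matrix.star_mulVec, (hsqrt ▸ sand_herm _ : hρ.sqrtᴴ = hρ.sqrt),
        Matrix.dotProduct_mulVec, Matrix.vecMul_vecMul]
    rw [dot_self_eq_nsq] at h1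
    rw [show hρ.sqrt * hρ.sqrt = ρA by
        rw [hsqrt, sand_mul hW1, hρeq]; congr 1; funext i
        exact Real.mul_self_sqrt (hρ.eigenvalues_nonneg i), hρeq, sand_quad] at h1
    exact Complex.ofReal_inj.mp h1
  set S1 : ℝ := ∑ i, Real.sqrt (lam i) * nn i with hS1
  have hvw : dotProduct (star v) w = ((S1 : ℝ) : ℂ) := by
    rw [hw, hsqrt, sand_quad]
  have hS1lb : Real.sqrt α * N ≤ S1 := by
    rw [hS1, hNsum, Finset.mul_sum]
    exact Finset.sum_le_sum fun i _ =>
      mul_le_mul_of_nonneg_right (Real.sqrt_le_sqrt (hlo i)) (hnn0 i)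
  have hS10 : 0 ≤ S1 :=
    le_trans (mul_nonneg (Real.sqrt_nonneg _) hNpos.le) hS1lb
  have hS2ub : nsq w ≤ β * N := by
    rw [hS2sum, hNsum, Finset.mul_sum]
    exact Finset.sum_le_sum fun i _ => mul_le_mul_of_nonneg_right (hhi i) (hnn0 i)
  have hS2lb : α * N ≤ nsq w := by
    rw [hS2sum, hNsum, Finset.mul_sum]
    exact Finset.sum_le_sum fun i _ => mul_le_mul_of_nonneg_right (hlo i) (hnn0 i)
  have hκd : κ * (dA : ℝ) = 1 := inv_mul_cancel₀ hdA.ne'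
  have hsqrt4 : ∀ s : ℝ, s ≤ 4 * ((dA : ℝ) * δ) → Real.sqrt s ≤ 2 * Real.sqrt ((dA : ℝ) * δ) := by
    intro s hs
    have h1 := Real.sqrt_le_sqrt hs
    rwa [show (4 : ℝ) * ((dA : ℝ) * δ) = 2 ^ 2 * ((dA : ℝ) * δ) by norm_num,
      Real.sqrt_mul (by positivity), Real.sqrt_sq (by norm_num)] at h1
  by_cases hw0 : w = 0
  · -- degenerate case: √ρ v = 0
    have hnw0 : nsq w = 0 := by rw [hw0]; simp [nsq]
    have hα_le : α ≤ 0 := by nlinarith [hS2lb, hNpos]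
    have h12 : (1 : ℝ) / 2 ≤ (dA : ℝ) * δ := by
      have hκ2δ : κ ≤ 2 * δ := by rw [hα] at hα_le; linarith
      nlinarith [hκd, hdA]
    have houter0 : outer (normalizeVec w) = 0 := by
      rw [hw0, normalizeVec_zero]
      ext i j
      simp [outer]
    have hTD : traceDist (outer (normalizeVec w)) (outer (normalizeVec v)) =
        traceNorm (outer (normalizeVec w) - outer (normalizeVec v)) / 2 := rfl
    rw [hTD, houter0, outer_eq_outer2, traceNorm_neg_outer _ (dot_normalize hz)]
    have ht := Real.sqrt_nonneg ((dA : ℝ) * δ)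
    have hsq : Real.sqrt ((dA : ℝ) * δ) ^ 2 = (dA : ℝ) * δ :=
      Real.sq_sqrt (by linarith)
    nlinarith
  · -- main case
    have hS2pos : 0 < nsq w := nsq_pos hw0
    have hwunit := dot_normalize hw0
    have hvunit := dot_normalize hz
    have hmain := rankone_traceNorm _ _ hwunit hvunit
    have hcc : dotProduct (star (normalizeVec w)) (normalizeVec v) =
        ((S1 / (Real.sqrt (nsq w) * Real.sqrt N) : ℝ) : ℂ) := by
      rw [dot_normalize_pair, star_dot_comm, hvw, Complex.conj_ofReal]
      push_cast
      rfl
    have hnormsq : Complex.normSq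
        (dotProduct (star (normalizeVec w)) (normalizeVec v)) =
        (S1 / (Real.sqrt (nsq w) * Real.sqrt N)) ^ 2 := by
      rw [hcc, Complex.normSq_ofReal]
      ring
    have hβκ : κ ≤ β := by rw [hβ]; linarith
    have hdb : 1 ≤ (dA : ℝ) * β := by
      have h5 : (dA : ℝ) * κ ≤ (dA : ℝ) * β := mul_le_mul_of_nonneg_left hβκ hdA.le
      have h6 : (dA : ℝ) * κ = 1 := by rw [mul_comm]; exact hκd
      linarith
    have hba : β - α ≤ 4 * δ := by rw [hα, hβ]; linarith
    have hfinal : 1 - (S1 / (Real.sqrt (nsq w) * Real.sqrt N)) ^ 2 ≤ 4 * ((dA : ℝ) * δ) :=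
      scalar_main α β N S1 (nsq w) δ (dA : ℝ) hα0 hβpos hNpos hS2pos hS1lb hS2ub
        hba hdb hδ0
    have hTD : traceDist (outer (normalizeVec w)) (outer (normalizeVec v)) =
        traceNorm (outer (normalizeVec w) - outer (normalizeVec v)) / 2 := rfl
    rw [hTD, outer_eq_outer2, outer_eq_outer2]
    have hstep : traceNorm (outer2 (normalizeVec w) (normalizeVec w) -
        outer2 (normalizeVec v) (normalizeVec v)) / 2 ≤
        Real.sqrt (1 - (S1 / (Real.sqrt (nsq w) * Real.sqrt N)) ^ 2) := by
      rw [← hnormsq]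
      linarith [hmain]
    exact hstep.trans (hsqrt4 _ hfinal)
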